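/- Let n, l be natural numbers. The dimension of the Σ_n-invariant subspace of the space of functions (Fin l → Fin n) → ℝ equals the number of set partitions of Fin l into at most n nonempty blocks. -/

import Mathlib

/-!
A function constant on orbits is the same as a function on the set of orbits, so the dimension is
the number of `Σ_n`-orbits of tuples `i : Fin l → Fin n`. A tuple is determined up to a permutation
of `Fin n` by its fibre partition `Setoid.ker i`, because a bijection between the ranges of two
tuples with the same fibres extends to a permutation of `Fin n`; and the partitions that arise as
fibre partitions are exactly those with at most `n` blocks.
-/

/-- The `Σ_n`-invariant subspace of `(Fin l → Fin n) → ℝ ≅ (ℝ^n)^{⊗ l}`: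
functions `f` with `f (σ ∘ i) = f i` for every permutation `σ` of `Fin n`. -/
def invariantFunctions (n l : ℕ) : Submodule ℝ ((Fin l → Fin n) → ℝ) where
  carrier := {f | ∀ (σ : Equiv.Perm (Fin n)) (i : Fin l → Fin n), f (σ ∘ i) = f i}
  add_mem' := by
    intro f g hf hg σ i
    simp only [Pi.add_apply, hf σ i, hg σ i]
  zero_mem' := by intro σ i; rfl
  smul_mem' := by
    intro c f hf σ i
    simp only [Pi.smul_apply, hf σ i]

namespace MulAction

variable (G X K : Type*) [Group G] [MulAction G X]

def invariantFunctions [Semiring K] : Submodule K (X → K) where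
  carrier := {f | ∀ (g : G) (x : X), f (g • x) = f x}
  add_mem' hf hg g x := by simp only [Pi.add_apply, hf g x, hg g x]
  zero_mem' _ _ := rfl
  smul_mem' c f hf g x := by simp only [Pi.smul_apply, hf g x]

noncomputable def invariantFunctionsEquiv [Semiring K] :
    invariantFunctions G X K ≃ₗ[K] (orbitRel.Quotient G X → K) where
  toFun f := Quotient.lift f.1 (by rintro _ x ⟨g, rfl⟩; exact f.2 g x)
  invFun f := ⟨f ∘ Quotient.mk _, fun g x => congrArg f (Quotient.sound (mem_orbit x g))⟩
  map_add' f g := funext fun q => Quotient.inductionOn q fun _ => rfl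
  map_smul' c f := funext fun q => Quotient.inductionOn q fun _ => rfl
  left_inv _ := rfl
  right_inv f := funext fun q => Quotient.inductionOn q fun _ => rfl

theorem finrank_invariantFunctions [Ring K] [StrongRankCondition K] [Finite X] :
    Module.finrank K (invariantFunctions G X K) = Nat.card (orbitRel.Quotient G X) := by
  have : Fintype (orbitRel.Quotient G X) := Fintype.ofFinite _
  rw [(invariantFunctionsEquiv G X K).finrank_eq, Module.finrank_fintype_fun_eq_card,
    Nat.card_eq_fintype_card]

end MulAction

namespace Setoid

variable {ι α β : Type*}

theorem ker_comp_of_injective {f : α → β} (hf : Function.Injective f) (i : ι → α) :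
    ker (f ∘ i) = ker i :=
  ext fun _ _ => hf.eq_iff

theorem ncard_classes (r : Setoid α) : r.classes.ncard = Nat.card (Quotient r) := by
  rw [← Nat.card_coe_set_eq, Nat.card_congr r.quotientEquivClasses]

theorem card_quotient_ker_le [Finite β] (f : α → β) : Nat.card (Quotient (ker f)) ≤ Nat.card β :=
  Nat.card_le_card_of_injective _ (kerLift_injective f)

theorem exists_ker_eq_of_card_quotient_le [Finite α] [Finite β] (r : Setoid α)
    (hr : Nat.card (Quotient r) ≤ Nat.card β) : ∃ f : α → β, ker f = r := by
  have := Fintype.ofFinite (Quotient r)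
  have := Fintype.ofFinite β
  obtain ⟨φ⟩ := Function.Embedding.nonempty_of_card_le (α := Quotient r) (β := β)
    (by rwa [← Nat.card_eq_fintype_card, ← Nat.card_eq_fintype_card])
  exact ⟨φ ∘ Quotient.mk r, (ker_comp_of_injective φ.injective _).trans (ker_mk_eq r)⟩

variable (α) in
noncomputable def equivPartitionsNcardLE (n : ℕ) :
    {r : Setoid α // Nat.card (Quotient r) ≤ n} ≃ {C : Set (Set α) // IsPartition C ∧ C.ncard ≤ n}
    where
  toFun r := ⟨r.1.classes, isPartition_classes r.1, (ncard_classes r.1).trans_le r.2⟩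
  invFun C := ⟨mkClasses C.1 C.2.1.2, by
    rw [← ncard_classes, classes_mkClasses C.1 C.2.1]
    exact C.2.2⟩
  left_inv r := Subtype.ext (mkClasses_classes r.1)
  right_inv C := Subtype.ext (classes_mkClasses C.1 C.2.1)

end Setoid

namespace Equiv.Perm

variable {ι α : Type*}

theorem exists_comp_eq_of_ker_eq [Finite ι] {i j : ι → α} (h : Setoid.ker i = Setoid.ker j) :
    ∃ σ : Perm α, σ ∘ i = j := by
  have hker : ∀ a b, i a = i b ↔ j a = j b := Setoid.ext_iff.mp h
  let j' : Quotient (Setoid.ker i) → α := Quotient.lift j fun a b => (hker a b).mp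
  have hj' : Function.Injective j' := fun a b =>
    Quotient.inductionOn₂ a b fun a b hab => Quotient.sound ((hker a b).mpr hab)
  obtain ⟨σ, hσ⟩ := exists_extending_pair _ j' (Setoid.kerLift_injective i) hj'
  exact ⟨σ, funext fun x => hσ ⟦x⟧⟩

variable (ι α) in
noncomputable def orbitRelQuotientFunEquiv [Finite ι] [Finite α] :
    MulAction.orbitRel.Quotient (Perm α) (ι → α) ≃
      {r : Setoid ι // Nat.card (Quotient r) ≤ Nat.card α} :=
  Equiv.ofBijective
    (Quotient.lift (fun i => ⟨Setoid.ker i, Setoid.card_quotient_ker_le i⟩) <| by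
      rintro _ i ⟨σ, rfl⟩
      exact Subtype.ext (Setoid.ker_comp_of_injective σ.injective i))
    ⟨fun a b => Quotient.inductionOn₂ a b fun i j hij => by
        obtain ⟨σ, hσ⟩ := exists_comp_eq_of_ker_eq (congrArg Subtype.val hij).symm
        exact Quotient.sound ⟨σ, hσ⟩,
      fun ⟨r, hr⟩ =>
        let ⟨i, hi⟩ := Setoid.exists_ker_eq_of_card_quotient_le r hr
        ⟨⟦i⟧, Subtype.ext hi⟩⟩

end Equiv.Perm

/-- The dimension of the `Σ_n`-invariant subspace of `(ℝ^n)^{⊗ l}` equals the number of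
set partitions of `Fin l` into at most `n` nonempty blocks. -/
theorem finrank_invariants_eq_card_partitions (n l : ℕ) :
    Module.finrank ℝ (invariantFunctions n l) =
      Nat.card {P : Set (Set (Fin l)) // Setoid.IsPartition P ∧ P.ncard ≤ n} := by
  have hinv : invariantFunctions n l =
      MulAction.invariantFunctions (Equiv.Perm (Fin n)) (Fin l → Fin n) ℝ := rfl
  rw [hinv, MulAction.finrank_invariantFunctions, Nat.card_congr
    ((Equiv.Perm.orbitRelQuotientFunEquiv _ _).trans (Setoid.equivPartitionsNcardLE _ _)),
    Nat.card_fin]
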